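/- Let r_d > 0, u, σ, u_d, T be reals, σ_d > 0, γ > 0, θ > 0, λ ∈ ℝ. Define g : ℝ → ℝ by g(s) = (θu/r_d)(1 − e^{r_d s}) − (θ²σ²/(4r_d))(1 − e^{2r_d s}) − ((u_d − r_d)²/(2σ_d²))·s, and V(t,x) = λ − (γ/θ)·exp{−θ x e^{r_d(T−t)} + g(T−t)}. Then V(T,x) = λ − (γ/θ)e^{−θx} for all x, and for every (t,x) ∈ [0,T] × ℝ: (i) the supremum over π ∈ ℝ of [π(u_d − r_d) + x r_d + u]·V_x(t,x) + (1/2)[σ² + π²σ_d²]·V_{xx}(t,x) is attained at π*(t) = ((u_d − r_d)/(θσ_d²))·e^{−r_d(T−t)}; and (ii) V_t(t,x) + [π*(t)(u_d − r_d) + x r_d + u]·V_x(t,x) + (1/2)[σ² + π*(t)²σ_d²]·V_{xx}(t,x) = 0. -/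

import Mathlib

/-!
With `E = e^{r_d(T-t)}` and `K = exp(-θxE + g(T-t)) > 0` one has `V_x = γEK > 0` and
`V_xx = -γθE²K < 0`, so the Hamiltonian is a concave quadratic in `π`, maximised where its
derivative `(u_d - r_d)V_x + πσ_d²V_xx` vanishes, i.e. at `π*`. In `V_t + H(π*)` the terms
linear in `x` cancel thanks to the factor `E`, and the remaining ones cancel because `g` solves
`g'(s) = -θu e^{r_d s} + (θ²σ²/2)e^{2r_d s} - (u_d - r_d)²/(2σ_d²)`.
-/

open Real

lemma hamiltonian_le_of_first_order_condition {a b s σ p D₁ D₂ : ℝ} (hD₂ : D₂ ≤ 0)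
    (hfoc : a * D₁ + p * σ ^ 2 * D₂ = 0) (q : ℝ) :
    (q * a + b) * D₁ + 1 / 2 * (s + q ^ 2 * σ ^ 2) * D₂
      ≤ (p * a + b) * D₁ + 1 / 2 * (s + p ^ 2 * σ ^ 2) * D₂ := by
  have hgap : (p * a + b) * D₁ + 1 / 2 * (s + p ^ 2 * σ ^ 2) * D₂
      - ((q * a + b) * D₁ + 1 / 2 * (s + q ^ 2 * σ ^ 2) * D₂)
      = σ ^ 2 / 2 * -D₂ * (p - q) ^ 2 := by
    linear_combination (p - q) * hfoc
  have : 0 ≤ σ ^ 2 / 2 * -D₂ * (p - q) ^ 2 :=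
    mul_nonneg (mul_nonneg (by positivity) (neg_nonneg.mpr hD₂)) (sq_nonneg _)
  linarith

lemma hasDerivAt_const_sub_mul_exp (c C k d y : ℝ) :
    HasDerivAt (fun y => c - C * exp (-(k * y) + d)) (C * k * exp (-(k * y) + d)) y := by
  refine ((((hasDerivAt_id' y).const_mul k).fun_neg.add_const d).exp.const_mul C).const_sub c
    |>.congr_deriv ?_
  ring

lemma deriv_const_sub_mul_exp (c C k d : ℝ) :
    deriv (fun y => c - C * exp (-(k * y) + d)) = fun y => C * k * exp (-(k * y) + d) :=
  funext fun y => (hasDerivAt_const_sub_mul_exp c C k d y).deriv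

lemma deriv_deriv_const_sub_mul_exp (c C k d y : ℝ) :
    deriv (deriv fun y => c - C * exp (-(k * y) + d)) y = -(C * k ^ 2) * exp (-(k * y) + d) := by
  rw [deriv_const_sub_mul_exp]
  refine ((((hasDerivAt_id' y).const_mul k).fun_neg.add_const d).exp.const_mul (C * k)).deriv.trans
    ?_
  ring

lemma hasDerivAt_div_mul_one_sub_exp_sub (A B c r s : ℝ) (hr : r ≠ 0) :
    HasDerivAt (fun s => A / r * (1 - exp (r * s)) - B / (4 * r) * (1 - exp (2 * r * s)) - c * s)
      (-(A * exp (r * s)) + B / 2 * exp (r * s) ^ 2 - c) s := by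
  have h₁ := (((hasDerivAt_id' s).const_mul r).exp.const_sub 1).const_mul (A / r)
  have h₂ := (((hasDerivAt_id' s).const_mul (2 * r)).exp.const_sub 1).const_mul (B / (4 * r))
  refine ((h₁.fun_sub h₂).fun_sub ((hasDerivAt_id' s).const_mul c)).congr_deriv ?_
  rw [sq, ← exp_add, ← two_mul, ← mul_assoc]
  field_simp
  ring

lemma hasDerivAt_const_sub_mul_exp_neg_mul_exp_add {g : ℝ → ℝ} {g' : ℝ} (c C m r τ : ℝ)
    (hg : HasDerivAt g g' τ) :
    HasDerivAt (fun τ => c - C * exp (-(m * exp (r * τ)) + g τ))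
      (C * exp (-(m * exp (r * τ)) + g τ) * (m * r * exp (r * τ) - g')) τ := by
  refine (((((hasDerivAt_id' τ).const_mul r).exp.const_mul m).fun_neg.fun_add hg).exp.const_mul
    C).const_sub c |>.congr_deriv ?_
  ring

/-- Analytic content of Corollary 3.2 (domestic market only): the candidate value
function `V(t,x) = λ − (γ/θ)exp{−θxe^{r_d(T−t)} + g(T−t)}` with
`g(s) = (θu/r_d)(1−e^{r_d s}) − (θ²σ²/(4r_d))(1−e^{2r_d s}) − ((u_d−r_d)²/(2σ_d²))s`
satisfies the terminal condition, the supremum in the HJB equation is attained at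
`π*(t) = ((u_d−r_d)/(θσ_d²))e^{−r_d(T−t)}`, and `V` solves the HJB equation. -/
theorem stmt11 (r_d u σ u_d T σ_d γ θ lam : ℝ)
    (hr : r_d > 0) (hσd : σ_d > 0) (hγ : γ > 0) (hθ : θ > 0) :
    let g : ℝ → ℝ := fun s =>
      (θ * u / r_d) * (1 - Real.exp (r_d * s))
        - (θ ^ 2 * σ ^ 2 / (4 * r_d)) * (1 - Real.exp (2 * r_d * s))
        - ((u_d - r_d) ^ 2 / (2 * σ_d ^ 2)) * s
    let V : ℝ → ℝ → ℝ := fun t x =>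
      lam - (γ / θ) * Real.exp (-(θ * x * Real.exp (r_d * (T - t))) + g (T - t))
    let pstar : ℝ → ℝ := fun t =>
      (u_d - r_d) / (θ * σ_d ^ 2) * Real.exp (-(r_d * (T - t)))
    (∀ x : ℝ, V T x = lam - (γ / θ) * Real.exp (-(θ * x))) ∧
    (∀ t ∈ Set.Icc (0 : ℝ) T, ∀ x : ℝ,
      (∀ pp : ℝ,
        (pp * (u_d - r_d) + x * r_d + u) * deriv (fun x' => V t x') x
          + (1 / 2) * (σ ^ 2 + pp ^ 2 * σ_d ^ 2)
            * deriv (deriv (fun x' => V t x')) x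
        ≤ (pstar t * (u_d - r_d) + x * r_d + u) * deriv (fun x' => V t x') x
          + (1 / 2) * (σ ^ 2 + (pstar t) ^ 2 * σ_d ^ 2)
            * deriv (deriv (fun x' => V t x')) x) ∧
      deriv (fun s => V s x) t
        + (pstar t * (u_d - r_d) + x * r_d + u) * deriv (fun x' => V t x') x
        + (1 / 2) * (σ ^ 2 + (pstar t) ^ 2 * σ_d ^ 2)
          * deriv (deriv (fun x' => V t x')) x = 0) := by
  intro g V pstar
  refine ⟨fun x => by simp [V, g], fun t _ x => ?_⟩
  set E := exp (r_d * (T - t)) with hE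
  set K := exp (-(θ * E * x) + g (T - t)) with hK
  have hslice : (fun x' => V t x') = fun y => lam - γ / θ * exp (-(θ * E * y) + g (T - t)) := by
    funext y; simp only [V]; rw [← hE, mul_right_comm θ y E]
  have hVx : deriv (fun x' => V t x') x = γ / θ * (θ * E) * K := by
    rw [hslice, deriv_const_sub_mul_exp]
  have hVxx : deriv (deriv fun x' => V t x') x = -(γ / θ * (θ * E) ^ 2) * K := by
    rw [hslice, deriv_deriv_const_sub_mul_exp]
  have hVt : deriv (fun s => V s x) t = -(γ / θ * K * (θ * x * r_d * E
      - (-(θ * u * E) + θ ^ 2 * σ ^ 2 / 2 * E ^ 2 - (u_d - r_d) ^ 2 / (2 * σ_d ^ 2)))) := by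
    rw [((hasDerivAt_const_sub_mul_exp_neg_mul_exp_add lam (γ / θ) (θ * x) r_d (T - t)
      (hasDerivAt_div_mul_one_sub_exp_sub _ _ _ r_d (T - t) hr.ne')).comp_const_sub T t).deriv,
      hK, mul_right_comm θ E x]
  have hE0 : E ≠ 0 := exp_ne_zero _
  have hpstar : pstar t = (u_d - r_d) / (θ * σ_d ^ 2 * E) := by
    simp only [pstar, exp_neg, ← hE]
    field_simp
  have hfoc : (u_d - r_d) * (γ / θ * (θ * E) * K)
      + pstar t * σ_d ^ 2 * (-(γ / θ * (θ * E) ^ 2) * K) = 0 := by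
    rw [hpstar]; field_simp; ring
  have hVxx_nonpos : -(γ / θ * (θ * E) ^ 2) * K ≤ 0 :=
    mul_nonpos_of_nonpos_of_nonneg (neg_nonpos.mpr (by positivity)) (exp_pos _).le
  refine ⟨fun pp => ?_, ?_⟩
  · rw [hVx, hVxx]
    linarith [hamiltonian_le_of_first_order_condition (b := x * r_d + u) (s := σ ^ 2)
      hVxx_nonpos hfoc pp]
  · rw [hVt, hVx, hVxx, hpstar]
    field_simp
    ring
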